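/- Fix δ > 0 and nonnegative reals P_T, P₁₁, P₁₂, P₂ with P̄₁₁ := P₁₁ − δ ≥ 0, P̄₁₂ := P₁₂ − δ ≥ 0, P̄₂ := P₂ − δ ≥ 0. There exist constants c > 0 and C ≥ 0, depending only on δ, P_T, P₁₁, P₁₂, P₂, such that the following holds: for all integers n₁ ≥ n₂ ≥ 1 satisfying n₂·(P₁₁ + P₂) + (n₁ − n₂)·P₁₂ ≤ n₁·P_T, and for any mutually independent real random variables X_{1,1},…,X_{1,n₁}, X_{2,1},…,X_{2,n₂} on a probability space (Ω, 𝒜, ℙ) with X_{1,j} distributed as N(0, P̄₁₁) for 1 ≤ j ≤ n₂, X_{1,j} distributed as N(0, P̄₁₂) for n₂ < j ≤ n₁, and X_{2,j} distributed as N(0, P̄₂) for 1 ≤ j ≤ n₂, one has ℙ( Σ_{j=1}^{n₂} (X_{1,j} + X_{2,j})² + Σ_{j=n₂+1}^{n₁} X_{1,j}² > n₁·P_T ) ≤ C·exp(−c·n₂). -/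

import Mathlib

/-!
Pair each symbol of the second codeword with the symbol of the first codeword sent in the same
slot. The slot sums `Y j` are independent centred Gaussians whose variances `v j` satisfy
`∑ j, (v j + δ) + n₂ δ ≤ n₁ P_T` thanks to the backoff, so the violation event lies in
`{∑ j, Y j ^ 2 ≥ ∑ j, (v j + δ) + n₂ δ}`. For `t > 0` small in terms of `δ` and the powers,
`𝔼 exp (t Y²) = (1 - 2 t v)^(-1/2) ≤ exp (t (v + δ))`, so the Chernoff bound gives `exp (-t δ n₂)`.
-/

open MeasureTheory ProbabilityTheory Real Finset Function
open scoped NNReal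

lemma inv_sqrt_one_sub_le_exp {x : ℝ} (hx : x ≤ 1 / 2) :
    (√(1 - x))⁻¹ ≤ exp (x / 2 + x ^ 2) := by
  have hinv : (1 - x)⁻¹ ≤ exp (x + 2 * x ^ 2) := by
    refine le_trans ?_ (add_one_le_exp _)
    rw [inv_le_iff_one_le_mul₀ (by linarith)]
    nlinarith
  calc (√(1 - x))⁻¹ = √((1 - x)⁻¹) := (sqrt_inv _).symm
    _ ≤ √(exp (x + 2 * x ^ 2)) := sqrt_le_sqrt hinv
    _ = exp (x / 2 + x ^ 2) := by
      rw [sqrt_eq_iff_mul_self_eq_of_pos (exp_pos _), ← exp_add]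
      ring_nf

lemma exists_pos_forall_inv_sqrt_le_exp {δ : ℝ} (hδ : 0 < δ) (V : ℝ) :
    ∃ t > 0, ∀ u ∈ Set.Icc 0 V, 2 * t * u < 1 ∧ (√(1 - 2 * t * u))⁻¹ ≤ exp (t * (u + δ)) := by
  set W := max V δ
  have hW : 0 < W := lt_max_of_lt_right hδ
  refine ⟨δ / (4 * W ^ 2), by positivity, fun u ⟨hu0, huV⟩ => ?_⟩
  set t := δ / (4 * W ^ 2)
  -- `δ ≤ W` keeps `2 t u ≤ 1 / 2`, and `4 t W ^ 2 = δ` absorbs the quadratic error term.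
  have huW : u ≤ W := huV.trans (le_max_left V δ)
  have htW : 4 * t * W ^ 2 = δ := by simp only [t]; field_simp
  have htu : 2 * t * u ≤ 1 / 2 := by
    have : 2 * t * u * W ≤ 2 * t * W * W := by gcongr
    nlinarith [le_max_right V δ]
  refine ⟨by linarith, (inv_sqrt_one_sub_le_exp htu).trans (exp_le_exp.2 ?_)⟩
  have : u ^ 2 ≤ W ^ 2 := pow_le_pow_left₀ hu0 huW 2
  nlinarith [mul_le_mul_of_nonneg_left this (by positivity : 0 ≤ 4 * t ^ 2)]

lemma Fin.sum_univ_eq_sum_castLE_add_sum_filter_le {M : Type*} [AddCommMonoid M] {m n : ℕ}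
    (h : m ≤ n) (f : Fin n → M) :
    ∑ j, f j =
      ∑ i : Fin m, f (Fin.castLE h i) + ∑ j ∈ univ.filter (fun j : Fin n => m ≤ (j : ℕ)), f j := by
  have himage : univ.filter (fun j : Fin n => (j : ℕ) < m) = univ.map (Fin.castLEEmb h) := by
    ext j
    simp only [mem_filter, mem_univ, true_and, mem_map, Fin.castLEEmb_apply]
    exact ⟨fun hj => ⟨⟨j, hj⟩, rfl⟩, by rintro ⟨i, rfl⟩; exact i.2⟩
  rw [← sum_filter_add_sum_filter_not univ (fun j : Fin n => (j : ℕ) < m), himage, sum_map]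
  simp only [Fin.castLEEmb_apply, not_lt]

lemma Fin.sum_ite_val_lt {M : Type*} [AddCommMonoid M] {m n : ℕ} (h : m ≤ n) (a b : M) :
    ∑ j : Fin n, (if (j : ℕ) < m then a else b) = m • a + (n - m) • b := by
  have hcard := Fin.sum_univ_eq_sum_castLE_add_sum_filter_le h fun _ => 1
  simp only [← card_eq_sum_ones, card_univ, Fintype.card_fin] at hcard
  rw [Fin.sum_univ_eq_sum_castLE_add_sum_filter_le h,
    sum_congr rfl fun j hj => if_neg (not_lt.2 (mem_filter.1 hj).2)]
  simp [show #{j : Fin n | m ≤ (j : ℕ)} = n - m by omega]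

namespace ProbabilityTheory

variable {Ω ι κ : Type*} {mΩ : MeasurableSpace Ω} {μ : Measure Ω}

theorem iIndepFun.iIndepFun_finset {β : ι → Type*} [∀ i, MeasurableSpace (β i)]
    {f : ∀ i, Ω → β i} (hf : iIndepFun f μ) (hmeas : ∀ i, Measurable (f i))
    {S : κ → Finset ι} (hS : Pairwise (Disjoint on S)) :
    iIndepFun (fun k ω (i : S k) => f i ω) μ := by
  classical
  rw [iIndepFun_iff_measure_inter_preimage_eq_mul]
  intro K
  induction K using Finset.induction_on with
  | empty => simp [hf.isProbabilityMeasure]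
  | insert k K hk ih =>
    intro A hA
    set T := K.biUnion S
    have hsub : ∀ l ∈ K, S l ⊆ T := fun l hl => subset_biUnion_of_mem S hl
    -- the event over `K` is determined by the block over `T`, which is independent of `S k`
    set B : Set ((i : T) → β i) :=
      ⋂ l ∈ K.attach, (fun x (i : S l) => x ⟨i, hsub l l.2 i.2⟩) ⁻¹' A l
    have hB : MeasurableSet B :=
      .biInter (Set.toFinite _).countable fun l _ =>
        (measurable_pi_lambda _ fun i => measurable_pi_apply _) (hA l (mem_insert_of_mem l.2))
    have hKT : ⋂ l ∈ K, (fun ω (i : S l) => f i ω) ⁻¹' A l = (fun ω (i : T) => f i ω) ⁻¹' B := by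
      ext ω
      simp [B]
    have hdisj : Disjoint (S k) T :=
      (disjoint_biUnion_right _ _ _).2 fun l hl => hS fun hkl => hk (hkl ▸ hl)
    rw [set_biInter_insert, prod_insert hk, hKT,
      (hf.indepFun_finset (S k) T hdisj hmeas).measure_inter_preimage_eq_mul _ _
        (hA k (mem_insert_self k K)) hB, ← hKT, ih fun l hl => hA l (mem_insert_of_mem hl)]

theorem iIndepFun.iIndepFun_finset_sum {β : Type*} [AddCommMonoid β] [MeasurableSpace β]
    [MeasurableAdd₂ β] {f : ι → Ω → β} (hf : iIndepFun f μ) (hmeas : ∀ i, Measurable (f i))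
    {S : κ → Finset ι} (hS : Pairwise (Disjoint on S)) :
    iIndepFun (fun k => ∑ i ∈ S k, f i) μ := by
  have := (hf.iIndepFun_finset hmeas hS).comp (fun k x => ∑ i, x i)
    fun k => Finset.measurable_sum _ fun i _ => measurable_pi_apply i
  convert this using 2 with k
  ext ω
  simp [Finset.sum_apply, ← Finset.sum_coe_sort (S k)]

lemma integral_exp_mul_sq_gaussianReal {v : ℝ≥0} {t : ℝ} (h : 2 * t * v < 1) :
    ∫ x, exp (t * x ^ 2) ∂gaussianReal 0 v = (√(1 - 2 * t * v))⁻¹ := by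
  rcases eq_or_ne v 0 with rfl | hv
  · simp
  have hv0 : (0 : ℝ) < v := by positivity
  have h1 : 0 < 1 - 2 * t * v := by linarith
  have hpdf : ∀ x, gaussianPDFReal 0 v x • exp (t * x ^ 2)
      = (√(2 * π * v))⁻¹ * exp (-((1 - 2 * t * v) / (2 * v)) * x ^ 2) := by
    intro x
    rw [gaussianPDFReal, smul_eq_mul, mul_assoc, ← exp_add]
    congr 2
    field_simp
    ring
  rw [integral_gaussianReal_eq_integral_smul hv]
  simp_rw [hpdf]
  rw [integral_const_mul, integral_gaussian, div_div_eq_mul_div, ← sqrt_inv,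
    ← sqrt_mul (by positivity), ← sqrt_inv]
  congr 1
  field_simp

lemma integrable_exp_mul_sq_gaussianReal {v : ℝ≥0} {t : ℝ} (h : 2 * t * v < 1) :
    Integrable (fun x => exp (t * x ^ 2)) (gaussianReal 0 v) :=
  .of_integral_ne_zero <| by
    rw [integral_exp_mul_sq_gaussianReal h]
    exact inv_ne_zero (sqrt_ne_zero'.2 (by linarith))

section GaussianSquare

variable {Y : Ω → ℝ} {v : ℝ≥0} {t : ℝ}

lemma mgf_sq_of_map_eq_gaussianReal (hY : AEMeasurable Y μ) (hlaw : μ.map Y = gaussianReal 0 v)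
    (h : 2 * t * v < 1) :
    mgf (fun ω => Y ω ^ 2) μ t = (√(1 - 2 * t * v))⁻¹ := by
  rw [← integral_exp_mul_sq_gaussianReal h, ← hlaw, mgf, integral_map hY (by fun_prop)]

lemma integrable_exp_mul_sq_of_map_eq_gaussianReal (hY : AEMeasurable Y μ)
    (hlaw : μ.map Y = gaussianReal 0 v) (h : 2 * t * v < 1) :
    Integrable (fun ω => exp (t * Y ω ^ 2)) μ := by
  have := integrable_exp_mul_sq_gaussianReal h
  rw [← hlaw, integrable_map_measure (by fun_prop) hY] at this
  exact this

end GaussianSquare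

theorem iIndepFun.measureReal_sum_sq_ge_le [Fintype ι] {Y : ι → Ω → ℝ} (hY : iIndepFun Y μ)
    (hmeas : ∀ j, Measurable (Y j)) {v : ι → ℝ≥0}
    (hlaw : ∀ j, μ.map (Y j) = gaussianReal 0 (v j)) {t : ℝ} (ht : 0 ≤ t)
    (htv : ∀ j, 2 * t * v j < 1) (ε : ℝ) :
    μ.real {ω | ε ≤ ∑ j, Y j ω ^ 2} ≤ exp (-t * ε) * ∏ j, (√(1 - 2 * t * v j))⁻¹ := by
  have := hY.isProbabilityMeasure
  have hsq : iIndepFun (fun j ω => Y j ω ^ 2) μ := hY.comp (fun _ x => x ^ 2) fun _ => by fun_prop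
  have hsq_meas : ∀ j, Measurable fun ω => Y j ω ^ 2 := fun j => (hmeas j).pow_const 2
  have hchernoff := measure_ge_le_exp_mul_mgf ε ht
    (hsq.integrable_exp_mul_sum hsq_meas (s := Finset.univ) fun j _ =>
      integrable_exp_mul_sq_of_map_eq_gaussianReal (hmeas j).aemeasurable (hlaw j) (htv j))
  simp only [hsq.mgf_sum hsq_meas, Finset.sum_apply] at hchernoff
  convert hchernoff using 3 with j
  exact (mgf_sq_of_map_eq_gaussianReal (hmeas j).aemeasurable (hlaw j) (htv j)).symm

theorem iIndepFun.measureReal_sum_sq_ge_le_exp [Fintype ι] {Y : ι → Ω → ℝ}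
    (hY : iIndepFun Y μ) (hmeas : ∀ j, Measurable (Y j)) {v : ι → ℝ≥0}
    (hlaw : ∀ j, μ.map (Y j) = gaussianReal 0 (v j)) {t δ : ℝ} (ht : 0 ≤ t)
    (hv : ∀ j, 2 * t * v j < 1 ∧ (√(1 - 2 * t * v j))⁻¹ ≤ exp (t * (v j + δ))) (a : ℝ) :
    μ.real {ω | ∑ j, ((v j : ℝ) + δ) + a ≤ ∑ j, Y j ω ^ 2} ≤ exp (-t * a) :=
  calc _ ≤ exp (-t * (∑ j, ((v j : ℝ) + δ) + a)) * ∏ j, (√(1 - 2 * t * v j))⁻¹ :=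
        hY.measureReal_sum_sq_ge_le hmeas hlaw ht (fun j => (hv j).1) _
    _ ≤ exp (-t * (∑ j, ((v j : ℝ) + δ) + a)) * ∏ j, exp (t * (v j + δ)) := by
        gcongr with j
        exact (hv j).2
    _ = exp (-t * a) := by
        rw [← exp_sum, ← exp_add, ← mul_sum]
        congr 1
        ring

end ProbabilityTheory

def overlapVariance {n₁ : ℕ} (n₂ : ℕ) (σ₁₁ σ₁₂ σ₂ : ℝ≥0) (j : Fin n₁) : ℝ≥0 :=
  if (j : ℕ) < n₂ then σ₁₁ + σ₂ else σ₁₂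

lemma sum_overlapVariance {n₁ n₂ : ℕ} (hn : n₂ ≤ n₁) (σ₁₁ σ₁₂ σ₂ : ℝ≥0) :
    ∑ j : Fin n₁, (overlapVariance n₂ σ₁₁ σ₁₂ σ₂ j : ℝ) =
      n₂ * (σ₁₁ + σ₂) + (n₁ - n₂) * σ₁₂ := by
  simp only [overlapVariance, apply_ite NNReal.toReal, NNReal.coe_add,
    Fin.sum_ite_val_lt hn, nsmul_eq_mul, Nat.cast_sub hn]

section Overlap

variable {Ω : Type*} {n₁ n₂ : ℕ} (hn : n₂ ≤ n₁) (X₁ : Fin n₁ → Ω → ℝ) (X₂ : Fin n₂ → Ω → ℝ)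

/-- Symbol `a` of either codeword is sent in slot `Sum.elim id (Fin.castLE hn) a`. -/
def overlapSum (j : Fin n₁) : Ω → ℝ :=
  ∑ a ∈ univ.filter (fun a => Sum.elim id (Fin.castLE hn) a = j), Sum.elim X₁ X₂ a

lemma overlapSum_of_lt (j : Fin n₁) (hj : (j : ℕ) < n₂) :
    overlapSum hn X₁ X₂ j = X₁ j + X₂ ⟨j, hj⟩ := by
  have hfiber : univ.filter (fun a => Sum.elim id (Fin.castLE hn) a = j)
      = {Sum.inl j, Sum.inr ⟨j, hj⟩} := by
    ext (a | a) <;> simp [Fin.ext_iff, eq_comm]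
  rw [overlapSum, hfiber, sum_pair Sum.inl_ne_inr]
  rfl

lemma overlapSum_of_le (j : Fin n₁) (hj : n₂ ≤ (j : ℕ)) : overlapSum hn X₁ X₂ j = X₁ j := by
  have hfiber : univ.filter (fun a => Sum.elim id (Fin.castLE hn) a = j) = {Sum.inl j} := by
    ext (a | a)
    · simp
    · simp only [mem_filter, mem_univ, Sum.elim_inr, true_and, mem_singleton, reduceCtorEq,
        iff_false, Fin.ext_iff, Fin.val_castLE]
      omega
  rw [overlapSum, hfiber, sum_singleton]
  rfl

lemma sum_sq_overlapSum (ω : Ω) :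
    ∑ j, overlapSum hn X₁ X₂ j ω ^ 2 = ∑ i : Fin n₂, (X₁ (Fin.castLE hn i) ω + X₂ i ω) ^ 2 +
      ∑ j ∈ univ.filter (fun j : Fin n₁ => n₂ ≤ (j : ℕ)), X₁ j ω ^ 2 := by
  rw [Fin.sum_univ_eq_sum_castLE_add_sum_filter_le hn]
  congr 1
  · refine sum_congr rfl fun i _ => ?_
    rw [overlapSum_of_lt hn X₁ X₂ _ i.2]
    rfl
  · exact sum_congr rfl fun j hj => by rw [overlapSum_of_le hn X₁ X₂ j (mem_filter.1 hj).2]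

variable {X₁ X₂} [MeasurableSpace Ω] {μ : Measure Ω}

lemma iIndepFun_overlapSum (hind : iIndepFun (Sum.elim X₁ X₂) μ)
    (hX : ∀ a, Measurable (Sum.elim X₁ X₂ a)) : iIndepFun (overlapSum hn X₁ X₂) μ :=
  hind.iIndepFun_finset_sum hX fun _ _ hjk =>
    disjoint_filter.2 fun _ _ hj hk => hjk (hj.symm.trans hk)

lemma measurable_overlapSum (hX : ∀ a, Measurable (Sum.elim X₁ X₂ a)) (j : Fin n₁) :
    Measurable (overlapSum hn X₁ X₂ j) := by
  simpa only [overlapSum, ← Finset.sum_apply] using Finset.measurable_sum _ fun a _ => hX a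

lemma map_overlapSum {σ₁₁ σ₁₂ σ₂ : ℝ≥0} (hind : iIndepFun (Sum.elim X₁ X₂) μ)
    (h₁₁ : ∀ j : Fin n₁, (j : ℕ) < n₂ → μ.map (X₁ j) = gaussianReal 0 σ₁₁)
    (h₁₂ : ∀ j : Fin n₁, n₂ ≤ (j : ℕ) → μ.map (X₁ j) = gaussianReal 0 σ₁₂)
    (h₂ : ∀ j, μ.map (X₂ j) = gaussianReal 0 σ₂) (j : Fin n₁) :
    μ.map (overlapSum hn X₁ X₂ j) = gaussianReal 0 (overlapVariance n₂ σ₁₁ σ₁₂ σ₂ j) := by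
  by_cases hj : (j : ℕ) < n₂
  · rw [overlapSum_of_lt hn X₁ X₂ j hj, overlapVariance, if_pos hj, ← zero_add (0 : ℝ)]
    exact gaussianReal_add_gaussianReal_of_indepFun (hind.indepFun Sum.inl_ne_inr) (h₁₁ j hj)
      (h₂ _)
  · rw [overlapSum_of_le hn X₁ X₂ j (not_lt.1 hj), overlapVariance, if_neg hj]
    exact h₁₂ j (not_lt.1 hj)

end Overlap

theorem sum_power_constraint_violation_exponential_bound_general
    (δ PT P₁₁ P₁₂ P₂ : ℝ) (hδ : 0 < δ)
    (hP₁₁ : 0 ≤ P₁₁ - δ) (hP₁₂ : 0 ≤ P₁₂ - δ) (hP₂ : 0 ≤ P₂ - δ) :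
    ∃ c C : ℝ, 0 < c ∧ 0 ≤ C ∧
      ∀ (n₁ n₂ : ℕ) (hn₂ : 1 ≤ n₂) (hn : n₂ ≤ n₁),
        (n₂ : ℝ) * (P₁₁ + P₂) + ((n₁ : ℝ) - n₂) * P₁₂ ≤ (n₁ : ℝ) * PT →
        ∀ (Ω : Type) (_ : MeasureSpace Ω) (_ : IsProbabilityMeasure (ℙ : Measure Ω))
          (X₁ : Fin n₁ → Ω → ℝ) (X₂ : Fin n₂ → Ω → ℝ),
          (∀ j, Measurable (X₁ j)) → (∀ j, Measurable (X₂ j)) →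
          iIndepFun (Sum.elim X₁ X₂) ℙ →
          (∀ j : Fin n₁, (j : ℕ) < n₂ →
            Measure.map (X₁ j) ℙ = gaussianReal 0 (P₁₁ - δ).toNNReal) →
          (∀ j : Fin n₁, n₂ ≤ (j : ℕ) →
            Measure.map (X₁ j) ℙ = gaussianReal 0 (P₁₂ - δ).toNNReal) →
          (∀ j : Fin n₂, Measure.map (X₂ j) ℙ = gaussianReal 0 (P₂ - δ).toNNReal) →
          (ℙ {ω | (n₁ : ℝ) * PT <
              (∑ j : Fin n₂, (X₁ (Fin.castLE hn j) ω + X₂ j ω) ^ 2) +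
              ∑ j ∈ Finset.univ.filter (fun j : Fin n₁ => n₂ ≤ (j : ℕ)),
                X₁ j ω ^ 2}).toReal ≤
            C * Real.exp (-c * n₂) := by
  obtain ⟨t, ht, hbound⟩ :=
    exists_pos_forall_inv_sqrt_le_exp hδ (P₁₁ - δ + (P₂ - δ) + (P₁₂ - δ))
  refine ⟨t * δ, 1, by positivity, zero_le_one, ?_⟩
  intro n₁ n₂ _ hn hbudget Ω _ _ X₁ X₂ hX₁ hX₂ hind hlaw₁₁ hlaw₁₂ hlaw₂
  have hX : ∀ a, Measurable (Sum.elim X₁ X₂ a) := Sum.forall.2 ⟨hX₁, hX₂⟩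
  set v := overlapVariance (n₁ := n₁) n₂ (P₁₁ - δ).toNNReal (P₁₂ - δ).toNNReal (P₂ - δ).toNNReal
  have hv : ∀ j, (v j : ℝ) ∈ Set.Icc 0 (P₁₁ - δ + (P₂ - δ) + (P₁₂ - δ)) := by
    intro j
    refine ⟨(v j).2, ?_⟩
    simp only [v, overlapVariance]
    split_ifs <;> push_cast [Real.coe_toNNReal _, hP₁₁, hP₁₂, hP₂] <;> linarith
  have hslack : ∑ j, ((v j : ℝ) + δ) + n₂ * δ ≤ n₁ * PT := by
    rw [sum_add_distrib, sum_overlapVariance hn]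
    simp only [Real.coe_toNNReal _, hP₁₁, hP₁₂, hP₂, sum_const, card_univ, Fintype.card_fin,
      nsmul_eq_mul]
    linarith
  calc (ℙ {ω | (n₁ : ℝ) * PT < _}).toReal
      ≤ (ℙ : Measure Ω).real
          {ω | ∑ j, ((v j : ℝ) + δ) + n₂ * δ ≤ ∑ j, overlapSum hn X₁ X₂ j ω ^ 2} :=
        measureReal_mono fun ω hω =>
          (hslack.trans (le_of_lt hω)).trans_eq (sum_sq_overlapSum hn X₁ X₂ ω).symm
    _ ≤ exp (-t * (n₂ * δ)) :=
        (iIndepFun_overlapSum hn hind hX).measureReal_sum_sq_ge_le_exp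
          (measurable_overlapSum hn hX) (map_overlapSum hn hind hlaw₁₁ hlaw₁₂ hlaw₂) ht.le
          (fun j => hbound _ (hv j)) _
    _ = 1 * exp (-(t * δ) * n₂) := by ring_nf

/-- Lemma 1, first assertion (22): under the sum power budget
`n₂(P₁₁+P₂) + (n₁-n₂)P₁₂ ≤ n₁ P_T`, independent Gaussian codewords generated with
power backoff `δ` satisfy
`ℙ(Σ_{j≤n₂} (X₁ⱼ+X₂ⱼ)² + Σ_{j>n₂} X₁ⱼ² > n₁ P_T) ≤ C exp(-c n₂)`. -/
theorem sum_power_constraint_violation_exponential_bound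
    (δ PT P₁₁ P₁₂ P₂ : ℝ) (hδ : 0 < δ)
    (hPT : 0 ≤ PT) (hP₁₁ : 0 ≤ P₁₁ - δ) (hP₁₂ : 0 ≤ P₁₂ - δ) (hP₂ : 0 ≤ P₂ - δ) :
    ∃ c C : ℝ, 0 < c ∧ 0 ≤ C ∧
      ∀ (n₁ n₂ : ℕ) (hn₂ : 1 ≤ n₂) (hn : n₂ ≤ n₁),
        (n₂ : ℝ) * (P₁₁ + P₂) + ((n₁ : ℝ) - n₂) * P₁₂ ≤ (n₁ : ℝ) * PT →
        ∀ (Ω : Type) (_ : MeasureSpace Ω) (_ : IsProbabilityMeasure (ℙ : Measure Ω))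
          (X₁ : Fin n₁ → Ω → ℝ) (X₂ : Fin n₂ → Ω → ℝ),
          (∀ j, Measurable (X₁ j)) → (∀ j, Measurable (X₂ j)) →
          iIndepFun (Sum.elim X₁ X₂) ℙ →
          (∀ j : Fin n₁, (j : ℕ) < n₂ →
            Measure.map (X₁ j) ℙ = gaussianReal 0 (P₁₁ - δ).toNNReal) →
          (∀ j : Fin n₁, n₂ ≤ (j : ℕ) →
            Measure.map (X₁ j) ℙ = gaussianReal 0 (P₁₂ - δ).toNNReal) →
          (∀ j : Fin n₂, Measure.map (X₂ j) ℙ = gaussianReal 0 (P₂ - δ).toNNReal) →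
          (ℙ {ω | (n₁ : ℝ) * PT <
              (∑ j : Fin n₂, (X₁ (Fin.castLE hn j) ω + X₂ j ω) ^ 2) +
              ∑ j ∈ Finset.univ.filter (fun j : Fin n₁ => n₂ ≤ (j : ℕ)),
                X₁ j ω ^ 2}).toReal ≤
            C * Real.exp (-c * n₂) :=
  sum_power_constraint_violation_exponential_bound_general δ PT P₁₁ P₁₂ P₂ hδ hP₁₁ hP₁₂ hP₂
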